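/- Fix p > 0. There exist a constant c > 0 and sequences of probability measures (G_m) and (H_m) on ℝ, each with p-th absolute moment at most 1 (∫ |u|^p dG_m ≤ 1 and ∫ |u|^p dH_m ≤ 1), such that ε_m² := d_H²(f_{G_m}, f_{H_m}) is strictly positive for all m, ε_m → 0 as m → ∞, and Regret(H_m‖G_m) ≥ c · ε_m^{2 − 2/p} for all sufficiently large m. -/

import Mathlib

open MeasureTheory Real Filter

/-- The standard normal density. -/
noncomputable def gauss (y : ℝ) : ℝ := (Real.sqrt (2 * Real.pi))⁻¹ * Real.exp (-(y ^ 2) / 2)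

/-- The Gaussian mixture density `f_G`. -/
noncomputable def mixDens (G : Measure ℝ) (y : ℝ) : ℝ := ∫ u, gauss (y - u) ∂G

/-- The regret `Regret(H‖G)`. -/
noncomputable def regret (H G : Measure ℝ) : ℝ :=
  ∫ y, (deriv (mixDens G) y / mixDens G y - deriv (mixDens H) y / mixDens H y) ^ 2 * mixDens G y

/-- The squared Hellinger distance between `f_G` and `f_H`. -/
noncomputable def hellingerSq (G H : Measure ℝ) : ℝ :=
  ∫ y, (Real.sqrt (mixDens G y) - Real.sqrt (mixDens H y)) ^ 2

lemma gauss_pos (y : ℝ) : 0 < gauss y := by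
  unfold gauss
  positivity

lemma gauss_cont : Continuous gauss := by
  unfold gauss
  fun_prop

lemma gauss_anti {x y : ℝ} (hx : 0 ≤ x) (hxy : x ≤ y) : gauss y ≤ gauss x := by
  unfold gauss
  have : Real.exp (-(y^2)/2) ≤ Real.exp (-(x^2)/2) := Real.exp_le_exp.2 (by nlinarith)
  have h0 : (0:ℝ) < (Real.sqrt (2 * Real.pi))⁻¹ := by positivity
  nlinarith

lemma hasDerivAt_gauss (y : ℝ) : HasDerivAt gauss (-y * gauss y) y := by
  have h1 : HasDerivAt (fun y : ℝ => -(y ^ 2) / 2) (-y) y := by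
    have := ((hasDerivAt_pow 2 y).neg).div_const 2
    simpa using this.congr_deriv (by ring)
  have h2 := (h1.exp).const_mul (Real.sqrt (2 * Real.pi))⁻¹
  unfold gauss
  exact h2.congr_deriv (by ring)

lemma gauss_integrable : Integrable gauss := by
  unfold gauss
  have : Integrable (fun y : ℝ => Real.exp (-(2⁻¹) * y ^ 2)) := integrable_exp_neg_mul_sq (by norm_num)
  exact (this.congr (by filter_upwards with y; ring_nf)).const_mul _

lemma integral_gauss : ∫ y, gauss y = 1 := by
  unfold gauss
  rw [integral_const_mul]
  have : ∫ y : ℝ, Real.exp (-(y ^ 2) / 2) = ∫ y : ℝ, Real.exp (-(2⁻¹) * y ^ 2) := by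
    congr 1; ext y; ring_nf
  rw [this, integral_gaussian]
  rw [show (π / 2⁻¹ : ℝ) = 2 * π by ring]
  rw [inv_mul_cancel₀ (by positivity)]


lemma integrable_dirac' {f : ℝ → ℝ} (hf : Measurable f) (a : ℝ) :
    Integrable f (Measure.dirac a) := by
  constructor
  · exact hf.aestronglyMeasurable
  · rw [HasFiniteIntegral, lintegral_dirac]
    exact ENNReal.coe_lt_top

noncomputable def mixM (w a : ℝ) : Measure ℝ :=
  ENNReal.ofReal (1 - w) • Measure.dirac 0 + ENNReal.ofReal w • Measure.dirac a

lemma isProb_mixM {w : ℝ} (hw0 : 0 ≤ w) (hw1 : w ≤ 1) (a : ℝ) :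
    IsProbabilityMeasure (mixM w a) := by
  constructor
  rw [mixM, Measure.add_apply, Measure.smul_apply, Measure.smul_apply,
    Measure.dirac_apply_of_mem (Set.mem_univ _), Measure.dirac_apply_of_mem (Set.mem_univ _)]
  simp only [smul_eq_mul, mul_one]
  rw [← ENNReal.ofReal_add (by linarith) hw0]
  norm_num

lemma integral_mixM {f : ℝ → ℝ} (hf : Measurable f) {w : ℝ} (hw0 : 0 ≤ w) (hw1 : w ≤ 1)
    (a : ℝ) : ∫ u, f u ∂(mixM w a) = (1 - w) * f 0 + w * f a := by
  rw [mixM, integral_add_measure ((integrable_dirac' hf 0).smul_measure ENNReal.ofReal_ne_top)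
      ((integrable_dirac' hf a).smul_measure ENNReal.ofReal_ne_top),
    integral_smul_measure, integral_smul_measure, integral_dirac, integral_dirac,
    ENNReal.toReal_ofReal (by linarith), ENNReal.toReal_ofReal hw0]
  simp [smul_eq_mul]

lemma mixDens_dirac : mixDens (Measure.dirac 0) = gauss := by
  funext y
  rw [mixDens, integral_dirac, sub_zero]

lemma mixDens_mixM {w : ℝ} (hw0 : 0 ≤ w) (hw1 : w ≤ 1) (a : ℝ) :
    mixDens (mixM w a) = fun y => (1 - w) * gauss y + w * gauss (y - a) := by
  funext y
  have hm : Measurable (fun u => gauss (y - u)) :=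
    gauss_cont.measurable.comp (measurable_const.sub measurable_id)
  rw [mixDens, integral_mixM hm hw0 hw1, sub_zero]

lemma deriv_mixDens_dirac (y : ℝ) : deriv (mixDens (Measure.dirac 0)) y = -y * gauss y := by
  rw [mixDens_dirac]; exact (hasDerivAt_gauss y).deriv

lemma hasDerivAt_mixDens_mixM {w : ℝ} (hw0 : 0 ≤ w) (hw1 : w ≤ 1) (a y : ℝ) :
    HasDerivAt (mixDens (mixM w a))
      ((1 - w) * (-y * gauss y) + w * (-(y - a) * gauss (y - a))) y := by
  rw [mixDens_mixM hw0 hw1]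
  have h1 := (hasDerivAt_gauss y).const_mul (1 - w)
  have h2 : HasDerivAt (fun y => gauss (y - a)) (-(y - a) * gauss (y - a)) y := by
    have := (hasDerivAt_gauss (y - a)).comp y ((hasDerivAt_id y).sub_const a)
    simpa [Function.comp_def] using this
  exact h1.add (h2.const_mul w)

lemma gauss_le_gauss_zero (y : ℝ) : gauss y ≤ gauss 0 := by
  rcases le_total 0 y with h | h
  · exact gauss_anti le_rfl h
  · have : gauss (-y) ≤ gauss 0 := gauss_anti le_rfl (by linarith)
    simpa [gauss, neg_pow] using this

section Bounds

variable {w a : ℝ} (hw0 : 0 < w) (hw1 : w ≤ 1) (ha : 1 ≤ a)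

private lemma F_pos (hw0 : 0 < w) (hw1 : w ≤ 1) (y : ℝ) :
    0 < (1 - w) * gauss y + w * gauss (y - a) := by
  have h1 := gauss_pos y
  have h2 := gauss_pos (y - a)
  nlinarith

include hw0 hw1 in
lemma regret_eq :
    regret (Measure.dirac 0) (mixM w a) =
      ∫ y, w ^ 2 * a ^ 2 * gauss (y - a) ^ 2 /
        ((1 - w) * gauss y + w * gauss (y - a)) := by
  unfold regret
  apply integral_congr_ae
  filter_upwards with y
  rw [deriv_mixDens_dirac, (hasDerivAt_mixDens_mixM hw0.le hw1 a y).deriv, mixDens_dirac]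
  simp only [mixDens_mixM hw0.le hw1]
  have hF := F_pos (a := a) hw0 hw1 y
  have hg := gauss_pos y
  field_simp
  ring

include hw0 hw1 in
lemma regret_integrand_integrable :
    Integrable (fun y => w ^ 2 * a ^ 2 * gauss (y - a) ^ 2 /
      ((1 - w) * gauss y + w * gauss (y - a))) := by
  have hψ : Integrable (fun y => w * a ^ 2 * gauss (y - a)) :=
    ((gauss_integrable.comp_sub_right a).const_mul _)
  apply hψ.mono'
  · apply Continuous.aestronglyMeasurable
    apply Continuous.div
    · exact continuous_const.mul ((gauss_cont.comp (continuous_id.sub continuous_const)).pow 2)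
    · exact (continuous_const.mul gauss_cont).add
        (continuous_const.mul (gauss_cont.comp (continuous_id.sub continuous_const)))
    · exact fun y => (F_pos hw0 hw1 y).ne'
  · filter_upwards with y
    have hF := F_pos (a := a) hw0 hw1 y
    have hg := gauss_pos (y - a)
    rw [Real.norm_eq_abs, abs_of_nonneg (by positivity)]
    rw [div_le_iff₀ hF]
    have hle : w * gauss (y - a) ≤ (1 - w) * gauss y + w * gauss (y - a) := by
      nlinarith [gauss_pos y]
    have h2 : w ^ 2 * a ^ 2 * gauss (y - a) ^ 2
        = (w * a ^ 2 * gauss (y - a)) * (w * gauss (y - a)) := by ring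
    rw [h2]
    exact mul_le_mul_of_nonneg_left hle (by positivity)

include hw0 hw1 ha in
lemma regret_lb (hga : gauss a ≤ w * gauss 0) :
    regret (Measure.dirac 0) (mixM w a) ≥ (gauss 1 ^ 2 / (2 * gauss 0)) * (w * a ^ 2) := by
  rw [regret_eq hw0 hw1]
  set φ : ℝ → ℝ := fun y => w ^ 2 * a ^ 2 * gauss (y - a) ^ 2 /
    ((1 - w) * gauss y + w * gauss (y - a)) with hφ
  have hint : Integrable φ := regret_integrand_integrable hw0 hw1
  have hnn : ∀ y, 0 ≤ φ y := fun y => by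
    have hF := F_pos (a := a) hw0 hw1 y
    positivity
  have h1 : ∫ y in Set.Icc a (a + 1), φ y ≤ ∫ y, φ y :=
    setIntegral_le_integral hint (Filter.Eventually.of_forall hnn)
  have h2 : (gauss 1 ^ 2 / (2 * gauss 0)) * (w * a ^ 2) *
      (volume (Set.Icc a (a + 1))).toReal ≤ ∫ y in Set.Icc a (a + 1), φ y := by
    apply setIntegral_ge_of_const_le_real measurableSet_Icc
    · rw [Real.volume_Icc]; exact ENNReal.ofReal_ne_top
    · intro y hy
      obtain ⟨hy1, hy2⟩ := hy
      have hg2 : gauss 1 ≤ gauss (y - a) := gauss_anti (by linarith) (by linarith)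
      have hgy : gauss y ≤ gauss a := gauss_anti (by linarith) hy1
      have hg0 : gauss (y - a) ≤ gauss 0 := gauss_le_gauss_zero _
      have hF := F_pos (a := a) hw0 hw1 y
      have hFle : (1 - w) * gauss y + w * gauss (y - a) ≤ 2 * w * gauss 0 := by
        nlinarith [gauss_pos y, gauss_pos 0]
      have key : w ^ 2 * a ^ 2 * gauss 1 ^ 2 / (2 * w * gauss 0) ≤ φ y := by
        apply div_le_div₀ (by positivity)
        · have h12 : gauss 1 ^ 2 ≤ gauss (y - a) ^ 2 :=
            pow_le_pow_left₀ (gauss_pos 1).le hg2 2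
          nlinarith [sq_nonneg (w * a)]
        · exact hF
        · exact hFle
      calc (gauss 1 ^ 2 / (2 * gauss 0)) * (w * a ^ 2)
          = w ^ 2 * a ^ 2 * gauss 1 ^ 2 / (2 * w * gauss 0) := by
            have hwne : w ≠ 0 := hw0.ne'
            have hg0 : gauss 0 ≠ 0 := (gauss_pos 0).ne'
            field_simp
        _ ≤ φ y := key
    · exact hint.integrableOn
  have hvol : (volume (Set.Icc a (a + 1))).toReal = 1 := by
    rw [Real.volume_Icc]
    norm_num
  rw [hvol, mul_one] at h2
  linarith

end Bounds

lemma sq_sqrt_sub_le {x y : ℝ} (hx : 0 ≤ x) (hy : 0 ≤ y) :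
    (Real.sqrt x - Real.sqrt y) ^ 2 ≤ |x - y| := by
  rcases le_total x y with h | h
  · rw [abs_of_nonpos (by linarith)]
    nlinarith [Real.sq_sqrt hx, Real.sq_sqrt hy, Real.sqrt_nonneg x, Real.sqrt_nonneg y,
      Real.sqrt_le_sqrt h, mul_self_nonneg (Real.sqrt x)]
  · rw [abs_of_nonneg (by linarith)]
    nlinarith [Real.sq_sqrt hx, Real.sq_sqrt hy, Real.sqrt_nonneg x, Real.sqrt_nonneg y,
      Real.sqrt_le_sqrt h, mul_self_nonneg (Real.sqrt y)]

section HB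
variable {w a : ℝ}

private lemma hell_integrand_le (hw0 : 0 < w) (hw1 : w ≤ 1) (y : ℝ) :
    (Real.sqrt ((1 - w) * gauss y + w * gauss (y - a)) - Real.sqrt (gauss y)) ^ 2 ≤
      w * (gauss (y - a) + gauss y) := by
  have h1 := gauss_pos y
  have h2 := gauss_pos (y - a)
  calc (Real.sqrt ((1 - w) * gauss y + w * gauss (y - a)) - Real.sqrt (gauss y)) ^ 2
      ≤ |((1 - w) * gauss y + w * gauss (y - a)) - gauss y| :=
        sq_sqrt_sub_le (by nlinarith) h1.le
    _ = w * |gauss (y - a) - gauss y| := by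
        rw [show ((1 - w) * gauss y + w * gauss (y - a)) - gauss y
            = w * (gauss (y - a) - gauss y) by ring, abs_mul, abs_of_nonneg hw0.le]
    _ ≤ w * (gauss (y - a) + gauss y) := by
        apply mul_le_mul_of_nonneg_left _ hw0.le
        rw [abs_le]; constructor <;> nlinarith

lemma hell_bound_integrable (hw0 : 0 < w) :
    Integrable (fun y => w * (gauss (y - a) + gauss y)) :=
  (((gauss_integrable.comp_sub_right a).add gauss_integrable).const_mul _)

lemma hellingerSq_eq (hw0 : 0 < w) (hw1 : w ≤ 1) :
    hellingerSq (mixM w a) (Measure.dirac 0) =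
      ∫ y, (Real.sqrt ((1 - w) * gauss y + w * gauss (y - a)) - Real.sqrt (gauss y)) ^ 2 := by
  unfold hellingerSq
  rw [mixDens_dirac]
  simp only [mixDens_mixM hw0.le hw1]

lemma hell_integrand_integrable (hw0 : 0 < w) (hw1 : w ≤ 1) :
    Integrable (fun y =>
      (Real.sqrt ((1 - w) * gauss y + w * gauss (y - a)) - Real.sqrt (gauss y)) ^ 2) := by
  apply (hell_bound_integrable hw0).mono'
  · apply Continuous.aestronglyMeasurable
    apply Continuous.pow
    apply Continuous.sub
    · apply Real.continuous_sqrt.comp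
      exact (continuous_const.mul gauss_cont).add
        (continuous_const.mul (gauss_cont.comp (continuous_id.sub continuous_const)))
    · exact Real.continuous_sqrt.comp gauss_cont
  · filter_upwards with y
    rw [Real.norm_eq_abs, abs_of_nonneg (sq_nonneg _)]
    exact hell_integrand_le hw0 hw1 y

lemma hellinger_ub (hw0 : 0 < w) (hw1 : w ≤ 1) :
    hellingerSq (mixM w a) (Measure.dirac 0) ≤ 2 * w := by
  rw [hellingerSq_eq hw0 hw1]
  have h := integral_mono (hell_integrand_integrable (a := a) hw0 hw1)
    (hell_bound_integrable (a := a) hw0) (hell_integrand_le (a := a) hw0 hw1)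
  apply h.trans
  rw [MeasureTheory.integral_const_mul, integral_add (gauss_integrable.comp_sub_right a) gauss_integrable,
    integral_sub_right_eq_self, integral_gauss]
  linarith

lemma hellinger_lb (hw0 : 0 < w) (hw1 : w ≤ 1) (ha : 1 ≤ a)
    (hga : gauss a ≤ w * gauss 1 / 4) :
    gauss 1 / 4 * w ≤ hellingerSq (mixM w a) (Measure.dirac 0) := by
  rw [hellingerSq_eq hw0 hw1]
  set ψ : ℝ → ℝ := fun y =>
    (Real.sqrt ((1 - w) * gauss y + w * gauss (y - a)) - Real.sqrt (gauss y)) ^ 2 with hψ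
  have hint : Integrable ψ := hell_integrand_integrable hw0 hw1
  have h1 : ∫ y in Set.Icc a (a + 1), ψ y ≤ ∫ y, ψ y :=
    setIntegral_le_integral hint (Filter.Eventually.of_forall fun y => sq_nonneg _)
  have h2 : gauss 1 / 4 * w * (volume (Set.Icc a (a + 1))).toReal ≤
      ∫ y in Set.Icc a (a + 1), ψ y := by
    apply setIntegral_ge_of_const_le_real measurableSet_Icc
    · rw [Real.volume_Icc]; exact ENNReal.ofReal_ne_top
    · intro y hy
      obtain ⟨hy1, hy2⟩ := hy
      have hg2 : gauss 1 ≤ gauss (y - a) := gauss_anti (by linarith) (by linarith)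
      have hgy : gauss y ≤ gauss a := gauss_anti (by linarith) hy1
      have hgypos := gauss_pos y
      -- √F ≥ √(w * gauss 1), √(gauss y) ≤ √(w * gauss 1)/2
      have hF : w * gauss 1 ≤ (1 - w) * gauss y + w * gauss (y - a) := by
        nlinarith
      have hupper : gauss y ≤ w * gauss 1 / 4 := le_trans hgy hga
      set s := Real.sqrt (w * gauss 1) with hs
      have hwg : 0 < w * gauss 1 := mul_pos hw0 (gauss_pos 1)
      have hspos : 0 < s := Real.sqrt_pos.2 hwg
      have hsq : s ^ 2 = w * gauss 1 := Real.sq_sqrt hwg.le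
      have hFs : s ≤ Real.sqrt ((1 - w) * gauss y + w * gauss (y - a)) :=
        Real.sqrt_le_sqrt hF
      have hys : Real.sqrt (gauss y) ≤ s / 2 := by
        have h4 : Real.sqrt (w * gauss 1 / 4) = s / 2 := by
          rw [hs, Real.sqrt_div hwg.le, show (4:ℝ) = 2 ^ 2 by norm_num,
            Real.sqrt_sq (by norm_num : (0:ℝ) ≤ 2)]
        rw [← h4]
        exact Real.sqrt_le_sqrt hupper
      have hdiff : s / 2 ≤ Real.sqrt ((1 - w) * gauss y + w * gauss (y - a))
          - Real.sqrt (gauss y) := by linarith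
      have : (s / 2) ^ 2 ≤ ψ y := by
        apply pow_le_pow_left₀ (by positivity) hdiff
      calc gauss 1 / 4 * w = (s / 2) ^ 2 := by rw [div_pow, hsq]; ring
        _ ≤ ψ y := this
    · exact hint.integrableOn
  have hvol : (volume (Set.Icc a (a + 1))).toReal = 1 := by
    rw [Real.volume_Icc]; norm_num
  rw [hvol, mul_one] at h2
  linarith

end HB

lemma abs_rpow_measurable (p : ℝ) : Measurable (fun u : ℝ => |u| ^ p) :=
  (continuous_abs.measurable).pow_const p

lemma moment_mixM {p w a : ℝ} (hp : 0 < p) (hw0 : 0 ≤ w) (hw1 : w ≤ 1) (ha : 0 < a) :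
    ∫ u, |u| ^ p ∂(mixM w a) = w * a ^ p := by
  rw [integral_mixM (abs_rpow_measurable p) hw0 hw1, abs_zero, Real.zero_rpow hp.ne',
    abs_of_pos ha]
  ring

lemma moment_dirac (p : ℝ) (hp : 0 < p) : ∫ u, |u| ^ p ∂(Measure.dirac (0:ℝ)) = 0 := by
  rw [integral_dirac, abs_zero, Real.zero_rpow hp.ne']

set_option maxHeartbeats 1000000 in
theorem regret_lower_bound_moment_class (p : ℝ) (hp : 0 < p) :
    ∃ c : ℝ, 0 < c ∧
      ∃ G H : ℕ → Measure ℝ,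
        (∀ m, IsProbabilityMeasure (G m)) ∧ (∀ m, IsProbabilityMeasure (H m)) ∧
        (∀ m, (∫ u, |u| ^ p ∂(G m)) ≤ 1) ∧ (∀ m, (∫ u, |u| ^ p ∂(H m)) ≤ 1) ∧
        (∀ m, 0 < hellingerSq (G m) (H m)) ∧
        Filter.Tendsto (fun m => Real.sqrt (hellingerSq (G m) (H m))) Filter.atTop (nhds 0) ∧
        (∀ᶠ m in Filter.atTop,
          regret (H m) (G m) ≥
            c * Real.sqrt (hellingerSq (G m) (H m)) ^ (2 - 2 / p)) := by
  -- step 1: find threshold A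
  have htend0 : Tendsto (fun x : ℝ => x ^ (p / 2) * Real.exp (-(1/2) * x)) atTop (nhds 0) :=
    tendsto_rpow_mul_exp_neg_mul_atTop_nhds_zero (p / 2) (1/2) (by norm_num)
  have hsq : Tendsto (fun t : ℝ => t ^ 2) atTop atTop := by
    exact tendsto_pow_atTop (by norm_num)
  have htend : Tendsto (fun t : ℝ => t ^ p * Real.exp (-(t ^ 2) / 2)) atTop (nhds 0) := by
    have h := htend0.comp hsq
    apply h.congr'
    filter_upwards [eventually_ge_atTop (0:ℝ)] with t ht
    show (t ^ 2) ^ (p / 2) * Real.exp (-(1/2) * t ^ 2) = t ^ p * Real.exp (-(t ^ 2) / 2)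
    rw [← Real.rpow_natCast t 2, ← Real.rpow_mul ht]
    norm_num
    ring_nf
  have hq : (0:ℝ) < Real.exp (-(1/2)) / 4 := by positivity
  have hev : ∀ᶠ t : ℝ in atTop, t ^ p * Real.exp (-(t ^ 2) / 2) ≤ Real.exp (-(1/2)) / 4 := by
    filter_upwards [htend.eventually (eventually_le_nhds hq)] with t ht using ht
  obtain ⟨A₀, hA₀⟩ := eventually_atTop.1 hev
  set A : ℝ := max A₀ 1 with hA
  -- parameters
  set a : ℕ → ℝ := fun m => A + m with haDef
  set w : ℕ → ℝ := fun m => a m ^ (-p) with hwDef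
  have ha1 : ∀ m, 1 ≤ a m := fun m => by
    have h1 : (0:ℝ) ≤ (m:ℝ) := Nat.cast_nonneg m
    simp only [haDef]; linarith [le_max_right A₀ 1]
  have hapos : ∀ m, 0 < a m := fun m => lt_of_lt_of_le one_pos (ha1 m)
  have hw0 : ∀ m, 0 < w m := fun m => Real.rpow_pos_of_pos (hapos m) _
  have hw1 : ∀ m, w m ≤ 1 := fun m =>
    Real.rpow_le_one_of_one_le_of_nonpos (ha1 m) (neg_nonpos.2 hp.le)
  have hwa : ∀ m, w m * a m ^ p = 1 := fun m => by
    simp only [hwDef]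
    rw [← Real.rpow_add (hapos m)]
    simp
  have hinv : ∀ m, w m = (a m ^ p)⁻¹ := fun m => by
    simp only [hwDef]
    exact Real.rpow_neg (hapos m).le p
  have hcond : ∀ m, a m ^ p * Real.exp (-(a m ^ 2) / 2) ≤ Real.exp (-(1/2)) / 4 := fun m => by
    apply hA₀
    have h1 : (0:ℝ) ≤ (m:ℝ) := Nat.cast_nonneg m
    simp only [haDef]; linarith [le_max_left A₀ 1]
  -- gauss facts
  set C : ℝ := (Real.sqrt (2 * Real.pi))⁻¹ with hC
  have hCpos : 0 < C := by rw [hC]; positivity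
  have hgauss1 : gauss 1 = C * Real.exp (-(1/2)) := by
    rw [show (-(1/2):ℝ) = -((1:ℝ) ^ 2)/2 by norm_num]; rfl
  have hgauss0 : gauss 0 = C := by
    show C * Real.exp (-((0:ℝ) ^ 2)/2) = C
    norm_num
  have hgaussa : ∀ m, gauss (a m) = C * Real.exp (-(a m ^ 2) / 2) := fun m => rfl
  have hga : ∀ m, gauss (a m) ≤ w m * gauss 1 / 4 := fun m => by
    have hX : (0:ℝ) < a m ^ p := Real.rpow_pos_of_pos (hapos m) _
    rw [hgaussa, hgauss1, hinv m,
      show (a m ^ p)⁻¹ * (C * Real.exp (-(1/2))) / 4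
        = (C * Real.exp (-(1/2)) / 4) / (a m ^ p) by ring,
      le_div_iff₀ hX]
    nlinarith [hcond m, hCpos, Real.exp_pos (-(a m ^ 2)/2)]
  have hga0 : ∀ m, gauss (a m) ≤ w m * gauss 0 := fun m => by
    have h := hga m
    have h10 : gauss 1 ≤ gauss 0 := gauss_anti le_rfl zero_le_one
    nlinarith [hw0 m, gauss_pos 1]
  -- constants
  set c₁ : ℝ := gauss 1 ^ 2 / (2 * gauss 0) with hc₁
  set c₂ : ℝ := gauss 1 / 4 with hc₂
  have hg1p := gauss_pos 1
  have hg0p := gauss_pos 0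
  have hc₁pos : 0 < c₁ := by rw [hc₁]; positivity
  have hc₂pos : 0 < c₂ := by rw [hc₂]; positivity
  set K : ℝ := 2 + c₂ ^ (1 - 1/p) with hK
  have hc₂e : 0 < c₂ ^ (1 - 1/p) := Real.rpow_pos_of_pos hc₂pos _
  have hKpos : 0 < K := by rw [hK]; linarith
  refine ⟨c₁ / K, by positivity, fun m => mixM (w m) (a m), fun m => Measure.dirac 0,
    fun m => isProb_mixM (hw0 m).le (hw1 m) _, fun m => inferInstance,
    fun m => ?_, fun m => ?_, fun m => ?_, ?_, ?_⟩
  · rw [moment_mixM hp (hw0 m).le (hw1 m) (hapos m), hwa m]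
  · rw [moment_dirac p hp]; norm_num
  · calc (0:ℝ) < c₂ * w m := by positivity
      _ ≤ _ := by rw [hc₂]; exact hellinger_lb (hw0 m) (hw1 m) (ha1 m) (hga m)
  · -- tendsto
    have hwtend : Tendsto w atTop (nhds 0) := by
      have h1 : Tendsto a atTop atTop := by
        apply tendsto_atTop_add_const_left
        exact tendsto_natCast_atTop_atTop
      exact (tendsto_rpow_neg_atTop hp).comp h1
    have h2w : Tendsto (fun m => Real.sqrt (2 * w m)) atTop (nhds 0) := by
      have h2 : Tendsto (fun m => 2 * w m) atTop (nhds 0) := by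
        simpa using hwtend.const_mul 2
      have hs := (Real.continuous_sqrt.tendsto 0).comp h2
      rw [Real.sqrt_zero] at hs
      exact hs
    apply tendsto_of_tendsto_of_tendsto_of_le_of_le tendsto_const_nhds h2w
    · exact fun m => Real.sqrt_nonneg _
    · exact fun m => Real.sqrt_le_sqrt (hellinger_ub (hw0 m) (hw1 m))
  · -- main inequality, holds for all m
    apply Filter.Eventually.of_forall
    intro m
    set h : ℝ := hellingerSq (mixM (w m) (a m)) (Measure.dirac 0) with hh
    have hlb : c₂ * w m ≤ h := by
      rw [hc₂]; exact hellinger_lb (hw0 m) (hw1 m) (ha1 m) (hga m)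
    have hub : h ≤ 2 * w m := hellinger_ub (hw0 m) (hw1 m)
    have hpos : 0 < h := lt_of_lt_of_le (by positivity) hlb
    set e : ℝ := 1 - 1/p with he
    have hsqrt_pow : Real.sqrt h ^ (2 - 2/p) = h ^ e := by
      rw [Real.sqrt_eq_rpow, ← Real.rpow_mul hpos.le]
      congr 1
      rw [he]; ring
    have hwe : (w m) ^ e = a m ^ (1 - p) := by
      simp only [hwDef]
      rw [← Real.rpow_mul (hapos m).le]
      congr 1
      rw [he]; field_simp; ring
    have hKbound : h ^ e ≤ K * (w m) ^ e := by
      have hwep : 0 < (w m) ^ e := Real.rpow_pos_of_pos (hw0 m) _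
      rcases le_or_gt 0 e with hE | hE
      · have h1 : h ^ e ≤ (2 * w m) ^ e := Real.rpow_le_rpow hpos.le hub hE
        have h2 : (2 * w m) ^ e = 2 ^ e * (w m) ^ e :=
          Real.mul_rpow (by norm_num) (hw0 m).le
        have h3 : (2:ℝ) ^ e ≤ 2 := by
          calc (2:ℝ) ^ e ≤ 2 ^ (1:ℝ) :=
              Real.rpow_le_rpow_of_exponent_le one_le_two
                (by rw [he]; have := one_div_pos.2 hp; linarith)
            _ = 2 := Real.rpow_one 2
        rw [hK]
        nlinarith
      · have h1 : h ^ e ≤ (c₂ * w m) ^ e :=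
          Real.rpow_le_rpow_of_nonpos (by positivity) hlb hE.le
        have h2 : (c₂ * w m) ^ e = c₂ ^ e * (w m) ^ e :=
          Real.mul_rpow hc₂pos.le (hw0 m).le
        rw [hK]
        nlinarith
    have hreg := regret_lb (hw0 m) (hw1 m) (ha1 m) (hga0 m)
    have hwa2 : w m * a m ^ 2 = a m ^ ((2:ℝ) - p) := by
      rw [← Real.rpow_natCast (a m) 2]
      simp only [hwDef]
      rw [← Real.rpow_add (hapos m)]
      norm_num
      congr 1
      ring
    have ha2p : a m ^ ((1:ℝ) - p) ≤ a m ^ ((2:ℝ) - p) :=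
      Real.rpow_le_rpow_of_exponent_le (ha1 m) (by linarith)
    have hfinal : c₁ / K * Real.sqrt h ^ (2 - 2/p) ≤
        regret (Measure.dirac 0) (mixM (w m) (a m)) := by
      calc c₁ / K * Real.sqrt h ^ (2 - 2/p) = c₁ / K * h ^ e := by rw [hsqrt_pow]
        _ ≤ c₁ / K * (K * (w m) ^ e) := by
            apply mul_le_mul_of_nonneg_left hKbound (by positivity)
        _ = c₁ * (w m) ^ e := by field_simp
        _ = c₁ * a m ^ ((1:ℝ) - p) := by rw [hwe]
        _ ≤ c₁ * a m ^ ((2:ℝ) - p) := mul_le_mul_of_nonneg_left ha2p hc₁pos.le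
        _ = c₁ * (w m * a m ^ 2) := by rw [hwa2]
        _ ≤ regret (Measure.dirac 0) (mixM (w m) (a m)) := hreg
    exact hfinal
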